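/- Let P be an idempotent n×n real matrix, Q = I − P, and L an n×n real matrix. Then the Mori–Zwanzig decomposition holds as a matrix identity for every t ∈ ℝ: P·L·exp(tL) = P·exp(tL)·P·L + P·exp(t·QL)·Q·L + ∫_0^t P·exp((t−τ)L)·P·L·exp(τ·QL)·Q·L dτ. -/

import Mathlib

open MeasureTheory intervalIntegral

attribute [local instance] Matrix.linftyOpNormedAddCommGroup Matrix.linftyOpNormedSpace

attribute [local instance] Matrix.linftyOpNormedRing Matrix.linftyOpNormedAlgebra

/-!
Differentiating `τ ↦ exp ((t - τ) • L) * exp (τ • (Q * L))` and integrating from `0` to `t` gives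
Duhamel's formula `exp (t • L) = exp (t • Q L) + ∫₀ᵗ exp ((t - τ) • L) P L exp (τ • Q L) dτ`,
because `L - Q L = P L`. Splitting `L = P L + Q L` in `P exp (t • L) L = P L exp (t • L)` and
substituting Duhamel's formula into the `Q L` part gives the decomposition.
-/

section Duhamel

open NormedSpace

variable {𝔸 : Type*} [NormedRing 𝔸] [NormedAlgebra ℝ 𝔸] [CompleteSpace 𝔸]

theorem continuous_exp_smul (A : 𝔸) : Continuous fun τ : ℝ => exp (τ • A) :=
  continuous_iff_continuousAt.2 fun τ => (hasDerivAt_exp_smul_const A τ).continuousAt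

theorem continuous_exp_smul_sub_mul_mul_exp_smul (A C B : 𝔸) (t : ℝ) :
    Continuous fun τ : ℝ => exp ((t - τ) • A) * C * exp (τ • B) :=
  (((continuous_exp_smul A).comp (continuous_sub_left t)).mul continuous_const).mul
    (continuous_exp_smul B)

theorem hasDerivAt_exp_smul_sub_mul_exp_smul (A B : 𝔸) (t τ : ℝ) :
    HasDerivAt (fun s : ℝ => exp ((t - s) • A) * exp (s • B))
      (-(exp ((t - τ) • A) * (A - B) * exp (τ • B))) τ := by
  have hA : HasDerivAt (fun s : ℝ => exp ((t - s) • A))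
      ((-1 : ℝ) • (exp ((t - τ) • A) * A)) τ :=
    (hasDerivAt_exp_smul_const A (t - τ)).scomp τ ((hasDerivAt_id τ).const_sub t)
  convert hA.mul (hasDerivAt_exp_smul_const' B τ) using 1
  · rfl
  rw [neg_one_smul]
  noncomm_ring

theorem exp_smul_eq_exp_smul_add_integral (A B : 𝔸) (t : ℝ) :
    exp (t • A) = exp (t • B) + ∫ τ in (0 : ℝ)..t, exp ((t - τ) • A) * (A - B) * exp (τ • B) := by
  have hFTC := integral_eq_sub_of_hasDerivAt
    (fun τ _ => hasDerivAt_exp_smul_sub_mul_exp_smul A B t τ)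
    ((continuous_exp_smul_sub_mul_mul_exp_smul A (A - B) B t).neg.intervalIntegrable 0 t)
  simp only [intervalIntegral.integral_neg, sub_self, zero_smul, exp_zero, sub_zero, one_mul,
    mul_one, neg_eq_iff_eq_neg, neg_sub] at hFTC
  rw [hFTC, add_sub_cancel]

theorem intervalIntegral.const_mul_integral_mul_const (a b : 𝔸) {f : ℝ → 𝔸} {s t : ℝ}
    (hf : IntervalIntegrable f volume s t) :
    a * (∫ τ in s..t, f τ) * b = ∫ τ in s..t, a * f τ * b :=
  ((((ContinuousLinearMap.mul ℝ 𝔸).flip b).comp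
    (ContinuousLinearMap.mul ℝ 𝔸 a)).intervalIntegral_comp_comm hf).symm

end Duhamel

open NormedSpace in
theorem mori_zwanzig_decomposition_general {n : ℕ} (P Q L : Matrix (Fin n) (Fin n) ℝ)
    (hQ : Q = 1 - P) (t : ℝ) :
    P * L * NormedSpace.exp (t • L) =
      P * NormedSpace.exp (t • L) * P * L +
        P * NormedSpace.exp (t • (Q * L)) * Q * L +
          ∫ τ in (0:ℝ)..t,
            P * NormedSpace.exp ((t - τ) • L) * P * L *
              NormedSpace.exp (τ • (Q * L)) * Q * L := by
  have hL : P * L + Q * L = L := by rw [hQ]; noncomm_ring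
  have hduhamel := exp_smul_eq_exp_smul_add_integral L (Q * L) t
  rw [← eq_sub_of_add_eq hL] at hduhamel
  calc P * L * exp (t • L) = P * exp (t • L) * (P * L + Q * L) := by
        rw [hL, mul_assoc, mul_assoc, ((Commute.refl L).smul_left t).exp_left.eq]
    _ = P * exp (t • L) * (P * L) + P * (exp (t • (Q * L)) + ∫ τ in (0 : ℝ)..t,
          exp ((t - τ) • L) * (P * L) * exp (τ • (Q * L))) * (Q * L) :=
        (mul_add _ _ _).trans
          (congrArg (fun E => P * exp (t • L) * (P * L) + P * E * (Q * L)) hduhamel)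
    _ = _ := by
        rw [mul_add, add_mul, const_mul_integral_mul_const _ _
          ((continuous_exp_smul_sub_mul_mul_exp_smul _ _ _ t).intervalIntegrable 0 t),
          ← add_assoc]
        simp only [mul_assoc]

/-- **Mori–Zwanzig decomposition** as a matrix identity: for an idempotent real `n × n`
matrix `P`, `Q = I - P`, and a real `n × n` matrix `L`, for every `t : ℝ`,
`P L exp (t L) = P exp (t L) P L + P exp (t Q L) Q L
  + ∫_0^t P exp ((t - τ) L) P L exp (τ Q L) Q L dτ`. -/
theorem mori_zwanzig_decomposition {n : ℕ} (P Q L : Matrix (Fin n) (Fin n) ℝ)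
    (hP : P * P = P) (hQ : Q = 1 - P) (t : ℝ) :
    P * L * NormedSpace.exp (t • L) =
      P * NormedSpace.exp (t • L) * P * L +
        P * NormedSpace.exp (t • (Q * L)) * Q * L +
          ∫ τ in (0:ℝ)..t,
            P * NormedSpace.exp ((t - τ) • L) * P * L *
              NormedSpace.exp (τ • (Q * L)) * Q * L :=
  mori_zwanzig_decomposition_general P Q L hQ t
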